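/- The linear span inside End(P_k) of the set {ρ(g) : g a symmetric 2 × 2 real matrix} is a subspace of dimension (k+1)(k+2)/2. -/

import Mathlib

/-
Send an endomorphism `T` of `P_k` to its coordinate vector `(T (X^i Y^(k-i)))_i`, an injective
linear map. For `g = [[a, b], [b, d]]` the coordinate vector of `ρ(g)` is a polynomial in
`(a, b, d)`, homogeneous of degree `k`: it equals `∑_{p+q ≤ k} a^p b^q d^(k-p-q) v_{p,q}`.
Distinct monomials are linearly independent functions on `ℝ³`, so the values span the same space
as the coefficients `v_{p,q}`. These are linearly independent: the coefficient of
`X^(p+q) Y^(k-p-q)` in the `p`-th coordinate is nonzero for `v_{p,q}` and vanishes for every other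
`v_{p',q'}` with `p' ≥ p`. So the dimension is the number of pairs `(p, q)` with `p + q ≤ k`.
-/

set_option synthInstance.maxHeartbeats 400000
set_option maxHeartbeats 400000

noncomputable section

open MvPolynomial

/-- `P_k`: the space of homogeneous polynomials of degree `k` in the two variables
`X = X 0` and `Y = X 1`, with basis the monomials `X^i Y^{k-i}`, `0 ≤ i ≤ k`. -/
def Pk (k : ℕ) : Submodule ℝ (MvPolynomial (Fin 2) ℝ) :=
  homogeneousSubmodule (Fin 2) ℝ k

/-- The substitution homomorphism `p(X, Y) ↦ p(aX + bY, cX + dY)`. -/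
def substHom (a b c d : ℝ) : MvPolynomial (Fin 2) ℝ →ₐ[ℝ] MvPolynomial (Fin 2) ℝ :=
  aeval ![C a * X 0 + C b * X 1, C c * X 0 + C d * X 1]

lemma substHom_mem (k : ℕ) (a b c d : ℝ) :
    ∀ p ∈ Pk k, substHom a b c d p ∈ Pk k := by
  intro p hp
  rw [Pk, mem_homogeneousSubmodule] at hp ⊢
  have hg : ∀ i : Fin 2,
      ((![C a * X 0 + C b * X 1, C c * X 0 + C d * X 1] : Fin 2 → MvPolynomial (Fin 2) ℝ) i).IsHomogeneous 1 := by
    intro i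
    fin_cases i <;>
      exact ((isHomogeneous_X ℝ _).C_mul _).add ((isHomogeneous_X ℝ _).C_mul _)
  simpa [substHom] using hp.aeval _ hg

/-- `ρ(g) : P_k → P_k`, the linear map sending `p(X, Y)` to `p(aX + bY, cX + dY)` for
`g = [[a, b], [c, d]]`. -/
def rhoEnd (k : ℕ) (a b c d : ℝ) : Module.End ℝ (Pk k) :=
  LinearMap.restrict (substHom a b c d).toLinearMap (substHom_mem k a b c d)

open Finset

theorem span_range_sum_smul_eq_span_range {ι α K V : Type*} [Fintype ι] [Field K]
    [AddCommGroup V] [Module K V] {g : ι → α → K} (hg : LinearIndependent K g)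
    (v : ι → V) :
    Submodule.span K (Set.range fun x => ∑ i, g i x • v i) =
      Submodule.span K (Set.range v) := by
  refine le_antisymm (Submodule.span_le.2 ?_) (Submodule.span_le.2 ?_)
  · rintro _ ⟨x, rfl⟩
    exact Submodule.sum_mem _ fun i _ => Submodule.smul_mem _ _ (Submodule.subset_span ⟨i, rfl⟩)
  · rintro _ ⟨j, rfl⟩
    by_contra hj
    obtain ⟨φ, hφj, hφ⟩ := Submodule.exists_dual_map_eq_bot_of_notMem hj inferInstance
    have hφg : ∑ i, φ (v i) • g i = 0 := funext fun x => by
      have hx : φ (∑ i, g i x • v i) = 0 := (Submodule.mem_bot K).1 <| hφ ▸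
        Submodule.mem_map_of_mem (Submodule.subset_span ⟨x, rfl⟩)
      simpa [mul_comm] using hx
    exact hφj (Fintype.linearIndependent_iff.1 hg _ hφg j)

theorem linearIndependent_eval_monomial {σ K : Type*} [Field K] [Infinite K] :
    LinearIndependent K fun m : σ →₀ ℕ => fun x : σ → K => eval x (monomial m 1) := by
  let evalₗ : MvPolynomial σ K →ₗ[K] (σ → K) → K :=
    LinearMap.pi fun x => (aeval x).toLinearMap
  have hinj : Function.Injective evalₗ := fun p q h => MvPolynomial.funext fun x => congrFun h x
  exact (basisMonomials σ K).linearIndependent.map' evalₗ (LinearMap.ker_eq_bot.2 hinj)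

theorem linearIndependent_of_dual_triangular {ι K V : Type*} [Field K] [AddCommGroup V]
    [Module K V] (v : ι → V) (φ : ι → Module.Dual K V) (rank : ι → ℕ)
    (hdiag : ∀ i, φ i (v i) ≠ 0)
    (htri : ∀ i j, j ≠ i → φ i (v j) ≠ 0 → rank j < rank i) :
    LinearIndependent K v := by
  classical
  rw [linearIndependent_iff']
  intro s c hsum i hi
  induction hr : rank i using Nat.strong_induction_on generalizing i with
  | _ n ih =>
    have hφ := congrArg (φ i) hsum
    rw [map_sum, map_zero, Finset.sum_eq_single_of_mem i hi] at hφ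
    · simpa [hdiag i] using hφ
    · intro j hj hji
      by_cases h : φ i (v j) = 0
      · simp [h]
      · simp [ih _ (hr ▸ htri i j hji h) j hj rfl]

lemma Pk_le_span_X_pow_mul_X_pow (k : ℕ) :
    Pk k ≤ Submodule.span ℝ (Set.range fun i : Fin (k + 1) =>
      (X 0 ^ (i : ℕ) * X 1 ^ (k - i) : MvPolynomial (Fin 2) ℝ)) := by
  rw [Pk, homogeneousSubmodule_eq_finsupp_supported, AddMonoidAlgebra.supported_eq_span_single]
  refine Submodule.span_mono ?_
  rintro _ ⟨m, hm, rfl⟩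
  have hdeg : m 0 + m 1 = k := by simpa [Finsupp.degree_eq_sum, Fin.sum_univ_two] using hm
  have hm : Finsupp.single 0 (m 0) + Finsupp.single 1 (m 1) = m :=
    Finsupp.ext fun j => by fin_cases j <;> simp
  refine ⟨⟨m 0, by omega⟩, ?_⟩
  change X 0 ^ m 0 * X 1 ^ (k - m 0) = monomial m 1
  rw [show k - m 0 = m 1 by omega, X_pow_eq_monomial, X_pow_eq_monomial, monomial_mul, one_mul, hm]

def xyMonomial (k : ℕ) (i : Fin (k + 1)) : Pk k :=
  ⟨X 0 ^ (i : ℕ) * X 1 ^ (k - i), by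
    have h := (isHomogeneous_X_pow (R := ℝ) (0 : Fin 2) i).mul (isHomogeneous_X_pow 1 (k - i))
    rwa [Nat.add_sub_cancel' (Nat.lt_succ_iff.1 i.2)] at h⟩

lemma span_xyMonomial (k : ℕ) : Submodule.span ℝ (Set.range (xyMonomial k)) = ⊤ := by
  rw [eq_top_iff, ← Submodule.map_le_map_iff_of_injective (Pk k).injective_subtype,
    Submodule.map_span, Submodule.map_subtype_top, ← Set.range_comp]
  exact Pk_le_span_X_pow_mul_X_pow k

def coordMap (k : ℕ) :
    Module.End ℝ (Pk k) →ₗ[ℝ] Fin (k + 1) → MvPolynomial (Fin 2) ℝ :=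
  LinearMap.pi fun i => (Pk k).subtype ∘ₗ LinearMap.applyₗ (xyMonomial k i)

lemma coordMap_injective (k : ℕ) : Function.Injective (coordMap k) := fun _ _ h =>
  LinearMap.ext_on_range (span_xyMonomial k) fun i => Subtype.ext (congrFun h i)

lemma coordMap_rhoEnd (k : ℕ) (a b c d : ℝ) (i : Fin (k + 1)) :
    coordMap k (rhoEnd k a b c d) i =
      (C a * X 0 + C b * X 1) ^ (i : ℕ) * (C c * X 0 + C d * X 1) ^ (k - i) := by
  simp [coordMap, rhoEnd, xyMonomial, substHom]

def pairsSumLe (k : ℕ) : Finset (ℕ × ℕ) :=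
  (range (k + 1) ×ˢ range (k + 1)).filter fun pq => pq.1 + pq.2 ≤ k

lemma mem_pairsSumLe {k : ℕ} {pq : ℕ × ℕ} : pq ∈ pairsSumLe k ↔ pq.1 + pq.2 ≤ k := by
  simp only [pairsSumLe, mem_filter, mem_product, mem_range]
  omega

lemma card_pairsSumLe (k : ℕ) : #(pairsSumLe k) = (k + 1) * (k + 2) / 2 := by
  suffices h : #(pairsSumLe k) * 2 = (k + 1) * (k + 2) by omega
  induction k with
  | zero => rfl
  | succ k ih =>
    have hsplit : pairsSumLe (k + 1) = pairsSumLe k ∪ antidiagonal (k + 1) := by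
      ext pq
      simp only [mem_union, mem_pairsSumLe, HasAntidiagonal.mem_antidiagonal]
      omega
    have hdisj : Disjoint (pairsSumLe k) (antidiagonal (k + 1)) := disjoint_left.2 fun pq h h' => by
      rw [mem_pairsSumLe] at h
      rw [HasAntidiagonal.mem_antidiagonal] at h'
      omega
    rw [hsplit, card_union_of_disjoint hdisj, Nat.card_antidiagonal, add_mul, ih]
    ring

/-- The coefficient of `a^p b^q d^(k-p-q)` in the coordinate vector of `ρ([[a, b], [b, d]])`:
the term of `(aX + bY)^i (bX + dY)^(k-i)` that takes `aX` from `p` factors, `bY` from `i - p`,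
`bX` from `p + q - i` and `dY` from the rest. -/
def symCoeff (k p q : ℕ) (i : Fin (k + 1)) : MvPolynomial (Fin 2) ℝ :=
  if p ≤ i ∧ (i : ℕ) ≤ p + q then
    ((i : ℕ).choose p * (k - i).choose (p + q - i) : ℝ) •
      (X 0 ^ (2 * p + q - i) * X 1 ^ (k - (2 * p + q - i)))
  else 0

lemma add_pow_mul_add_pow_eq_sum (k : ℕ) (a b d : ℝ) (i : ℕ) (hi : i ≤ k) :
    (C a * X 0 + C b * X 1) ^ i * (C b * X 0 + C d * X 1) ^ (k - i) =
      ∑ st ∈ range (i + 1) ×ˢ range (k - i + 1),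
        (a ^ st.1 * b ^ (i - st.1 + st.2) * d ^ (k - i - st.2) * i.choose st.1 *
            (k - i).choose st.2) •
          (X 0 ^ (st.1 + st.2) * X 1 ^ (k - (st.1 + st.2)) : MvPolynomial (Fin 2) ℝ) := by
  rw [add_pow, add_pow, sum_mul_sum, ← sum_product']
  refine sum_congr rfl fun st hst => ?_
  rw [mem_product, mem_range, mem_range] at hst
  rw [smul_eq_C_mul, show k - (st.1 + st.2) = (i - st.1) + (k - i - st.2) by omega]
  simp only [map_mul, map_pow, map_natCast]
  ring

lemma pow_mul_pow_eq_sum_symCoeff (k : ℕ) (a b d : ℝ) (i : Fin (k + 1)) :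
    (C a * X 0 + C b * X 1) ^ (i : ℕ) * (C b * X 0 + C d * X 1) ^ (k - i) =
      ∑ pq ∈ pairsSumLe k,
        (a ^ pq.1 * b ^ pq.2 * d ^ (k - pq.1 - pq.2)) • symCoeff k pq.1 pq.2 i := by
  have hik : (i : ℕ) ≤ k := Nat.lt_succ_iff.mp i.2
  have hsupp : ∑ pq ∈ pairsSumLe k,
        (a ^ pq.1 * b ^ pq.2 * d ^ (k - pq.1 - pq.2)) • symCoeff k pq.1 pq.2 i =
      ∑ pq ∈ (pairsSumLe k).filter (fun pq => pq.1 ≤ (i : ℕ) ∧ (i : ℕ) ≤ pq.1 + pq.2),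
        (a ^ pq.1 * b ^ pq.2 * d ^ (k - pq.1 - pq.2)) • symCoeff k pq.1 pq.2 i := by
    refine (sum_filter_of_ne fun pq _ hne => ?_).symm
    by_contra hc
    exact hne (by rw [symCoeff, if_neg hc, smul_zero])
  rw [add_pow_mul_add_pow_eq_sum k a b d i hik, hsupp]
  refine sum_nbij' (fun st => (st.1, i - st.1 + st.2)) (fun pq => (pq.1, pq.1 + pq.2 - i))
    ?_ ?_ ?_ ?_ ?_
  all_goals intro x hx; simp only [mem_product, mem_range, mem_filter, mem_pairsSumLe] at hx
  · simp only [mem_filter, mem_pairsSumLe]; omega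
  · simp only [mem_product, mem_range]; omega
  · exact Prod.ext rfl (by dsimp only; omega)
  · exact Prod.ext rfl (by dsimp only; omega)
  · rw [symCoeff, if_pos (by omega)]
    dsimp only
    rw [smul_smul, show 2 * x.1 + (i - x.1 + x.2) - i = x.1 + x.2 by omega,
      show x.1 + (i - x.1 + x.2) - i = x.2 by omega,
      show k - x.1 - (i - x.1 + x.2) = k - i - x.2 by omega]
    congr 1
    ring

lemma coeff_X_pow_mul_X_pow (u v j l : ℕ) :
    coeff (Finsupp.single 0 j + Finsupp.single 1 l) (X 0 ^ u * X 1 ^ v : MvPolynomial (Fin 2) ℝ) =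
      if u = j ∧ v = l then 1 else 0 := by
  rw [X_pow_eq_monomial, X_pow_eq_monomial, monomial_mul, one_mul, coeff_monomial]
  simp [Finsupp.ext_iff, Fin.forall_fin_two]

lemma coeff_symCoeff (k p q j : ℕ) (i : Fin (k + 1)) :
    coeff (Finsupp.single 0 j + Finsupp.single 1 (k - j)) (symCoeff k p q i) =
      if p ≤ i ∧ (i : ℕ) ≤ p + q ∧ 2 * p + q - i = j then
        ((i : ℕ).choose p * (k - i).choose (p + q - i) : ℝ) else 0 := by
  unfold symCoeff
  by_cases h : p ≤ i ∧ (i : ℕ) ≤ p + q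
  · rw [if_pos h, coeff_smul, coeff_X_pow_mul_X_pow, smul_eq_mul]
    by_cases hj : 2 * p + q - i = j
    · rw [if_pos ⟨hj, by omega⟩, if_pos ⟨h.1, h.2, hj⟩, mul_one]
    · rw [if_neg (by omega), if_neg (by omega), mul_zero]
  · rw [if_neg h, if_neg (by tauto), coeff_zero]

lemma linearIndependent_symCoeff (k : ℕ) :
    LinearIndependent ℝ fun pq : pairsSumLe k => symCoeff k pq.1.1 pq.1.2 := by
  have hlt (pq : pairsSumLe k) : pq.1.1 < k + 1 := by have := mem_pairsSumLe.1 pq.2; omega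
  refine linearIndependent_of_dual_triangular _
    (fun pq => lcoeff ℝ
        (Finsupp.single 0 (pq.1.1 + pq.1.2) + Finsupp.single 1 (k - (pq.1.1 + pq.1.2)))
      ∘ₗ LinearMap.proj ⟨pq.1.1, hlt pq⟩) (fun pq => pq.1.1) ?_ ?_
  · rintro ⟨⟨p, q⟩, hpq⟩
    have hpq := mem_pairsSumLe.1 hpq
    simp only [LinearMap.comp_apply, LinearMap.proj_apply, lcoeff_apply, coeff_symCoeff]
    rw [if_pos ⟨le_rfl, by omega, by omega⟩, Nat.choose_self, Nat.cast_one, one_mul,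
      Nat.add_sub_cancel_left]
    exact Nat.cast_ne_zero.2 (Nat.choose_pos (by omega)).ne'
  · rintro ⟨⟨p, q⟩, hpq⟩ ⟨⟨p', q'⟩, hpq'⟩ hne hcoeff
    simp only [LinearMap.comp_apply, LinearMap.proj_apply, lcoeff_apply, coeff_symCoeff] at hcoeff
    obtain ⟨hle, -, hdeg⟩ := (ite_ne_right_iff.1 hcoeff).1
    refine lt_of_le_of_ne hle fun hp => hne ?_
    simp only [Subtype.ext_iff, Prod.ext_iff] at hp ⊢
    omega

def symExponent (k : ℕ) (pq : ℕ × ℕ) : Fin 3 →₀ ℕ :=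
  Finsupp.single 0 pq.1 + Finsupp.single 1 pq.2 + Finsupp.single 2 (k - pq.1 - pq.2)

lemma symExponent_injective (k : ℕ) : Function.Injective (symExponent k) := fun _ _ h =>
  Prod.ext (by simpa [symExponent] using DFunLike.congr_fun h 0)
    (by simpa [symExponent] using DFunLike.congr_fun h 1)

lemma eval_monomial_symExponent (k : ℕ) (pq : ℕ × ℕ) (x : Fin 3 → ℝ) :
    eval x (monomial (symExponent k pq) 1) =
      x 0 ^ pq.1 * x 1 ^ pq.2 * x 2 ^ (k - pq.1 - pq.2) := by
  have hadd (a b : Fin 3 →₀ ℕ) : (a + b).prod (fun i n => x i ^ n) =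
      a.prod (fun i n => x i ^ n) * b.prod (fun i n => x i ^ n) :=
    Finsupp.prod_add_index' (fun _ => pow_zero _) fun _ _ _ => pow_add _ _ _
  rw [eval_monomial, one_mul, symExponent, hadd, hadd]
  simp only [Finsupp.prod_single_index, pow_zero]

lemma coordMap_rhoEnd_symm (k : ℕ) (x : Fin 3 → ℝ) :
    coordMap k (rhoEnd k (x 0) (x 1) (x 1) (x 2)) =
      ∑ pq : pairsSumLe k,
        eval x (monomial (symExponent k pq) 1) • symCoeff k pq.1.1 pq.1.2 := by
  funext i
  rw [coordMap_rhoEnd, pow_mul_pow_eq_sum_symCoeff, ← sum_coe_sort, Finset.sum_apply]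
  simp only [Pi.smul_apply, eval_monomial_symExponent]

/-- The linear span, inside `End(P_k)`, of the maps `ρ(g)` for `g` a
symmetric `2 × 2` real matrix, has dimension `(k+1)(k+2)/2`. -/
theorem statement11 (k : ℕ) :
    Set.finrank ℝ {T : Module.End ℝ (Pk k) | ∃ a b d : ℝ, T = rhoEnd k a b b d} =
      (k + 1) * (k + 2) / 2 := by
  have hset : {T : Module.End ℝ (Pk k) | ∃ a b d : ℝ, T = rhoEnd k a b b d} =
      Set.range fun x : Fin 3 → ℝ => rhoEnd k (x 0) (x 1) (x 1) (x 2) := by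
    ext T
    constructor
    · rintro ⟨a, b, d, rfl⟩; exact ⟨![a, b, d], rfl⟩
    · rintro ⟨x, rfl⟩; exact ⟨x 0, x 1, x 2, rfl⟩
  have hmono : LinearIndependent ℝ fun (pq : pairsSumLe k) (x : Fin 3 → ℝ) =>
      eval x (monomial (symExponent k pq) 1) :=
    linearIndependent_eval_monomial.comp _ ((symExponent_injective k).comp Subtype.val_injective)
  rw [Set.finrank, hset,
    (Submodule.equivMapOfInjective _ (coordMap_injective k) _).finrank_eq, Submodule.map_span,
    ← Set.range_comp, Function.comp_def, funext (coordMap_rhoEnd_symm k),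
    span_range_sum_smul_eq_span_range hmono, finrank_span_eq_card (linearIndependent_symCoeff k),
    Fintype.card_coe, card_pairsSumLe]
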